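/- Let H, W, m, k be positive integers with k ∣ mH and k ∣ mW, let w : ℤ → ℤ → ℂ be an arbitrary k×k interpolation kernel, and let X : ℤ → ℤ → ℂ be an image on the 2H×2W grid. Form the m-fold nearest-neighbor up-sampled image X_up(x,y) := X(⌊x/m⌋, ⌊y/m⌋), and then the rational-ratio resized image Z(x',y') := Σ_{s=0}^{k-1} Σ_{t=0}^{k-1} w(s,t)·X_up(kx'+s, ky'+t). Then for all integers u, v, the 2D discrete Fourier transform of Z on the 2(mH/k)×2(mW/k) grid satisfies F_Z(u,v) = (1/k²) · Σ_{a=0}^{k-1} Σ_{b=0}^{k-1} β_w(u_a, v_b)·β_up(u_a, v_b)·F_X(u_a, v_b), where u_a := u + 2amH/k and v_b := v + 2bmW/k, β_w(U,V) := Σ_{s=0}^{k-1} Σ_{t=0}^{k-1} w(s,t)·exp(2πi(Us/(2mH) + Vt/(2mW))), β_up(U,V) := Σ_{s=0}^{m-1} Σ_{t=0}^{m-1} exp(-2πi(Us/(2mH) + Vt/(2mW))), and F_X is the 2D discrete Fourier transform of X on the 2H×2W grid (evaluated at all integer frequencies via its defining, periodic, formula). Thus the spectrum of an image resized by the non-integer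 ratio k/m mixes contributions from the entire spectrum of the original image, not only its low-frequency region. -/
import Mathlib
set_option maxHeartbeats 1000000

/-- The 2D discrete Fourier transform of an image `Z : ℤ → ℤ → ℂ` on the `2M × 2N` grid:
`F_Z(u,v) = ∑_{x=-M}^{M-1} ∑_{y=-N}^{N-1} Z(x,y)·exp(-2πi(ux/(2M) + vy/(2N)))`. -/
noncomputable def dft (M N : ℤ) (Z : ℤ → ℤ → ℂ) (u v : ℤ) : ℂ :=
  ∑ x ∈ Finset.Icc (-M) (M - 1), ∑ y ∈ Finset.Icc (-N) (N - 1),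
    Z x y * Complex.exp (-(2 * (Real.pi : ℂ) * Complex.I) *
      ((u : ℂ) * (x : ℂ) / (2 * (M : ℂ)) + (v : ℂ) * (y : ℂ) / (2 * (N : ℂ))))

/-- The `m`-fold nearest-neighbor up-sampled image: `X_up(x,y) = X(⌊x/m⌋, ⌊y/m⌋)`
(floor division). -/
noncomputable def upsample (m : ℤ) (X : ℤ → ℤ → ℂ) (x y : ℤ) : ℂ :=
  X (Int.fdiv x m) (Int.fdiv y m)

/-- The `k`-fold down-sampled image with interpolation kernel `w`:
`Z(x',y') = ∑_{s=0}^{k-1} ∑_{t=0}^{k-1} w(s,t)·X(kx'+s, ky'+t)`. -/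
noncomputable def downsample (k : ℤ) (w X : ℤ → ℤ → ℂ) (x' y' : ℤ) : ℂ :=
  ∑ s ∈ Finset.Icc (0 : ℤ) (k - 1), ∑ t ∈ Finset.Icc (0 : ℤ) (k - 1),
    w s t * X (k * x' + s) (k * y' + t)

/-- The frequency response of the `k × k` kernel `w` on the `2mH × 2mW` grid:
`β_w(U,V) = ∑_{s=0}^{k-1} ∑_{t=0}^{k-1} w(s,t)·exp(2πi(Us/(2mH) + Vt/(2mW)))`. -/
noncomputable def betaW (H W m k : ℤ) (w : ℤ → ℤ → ℂ) (U V : ℤ) : ℂ :=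
  ∑ s ∈ Finset.Icc (0 : ℤ) (k - 1), ∑ t ∈ Finset.Icc (0 : ℤ) (k - 1),
    w s t * Complex.exp ((2 * (Real.pi : ℂ) * Complex.I) *
      ((U : ℂ) * (s : ℂ) / (2 * ((m * H : ℤ) : ℂ)) +
       (V : ℂ) * (t : ℂ) / (2 * ((m * W : ℤ) : ℂ))))

/-- The frequency response of `m`-fold nearest-neighbor up-sampling on the `2mH × 2mW` grid:
`β_up(U,V) = ∑_{s=0}^{m-1} ∑_{t=0}^{m-1} exp(-2πi(Us/(2mH) + Vt/(2mW)))`. -/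
noncomputable def betaUp (H W m : ℤ) (U V : ℤ) : ℂ :=
  ∑ s ∈ Finset.Icc (0 : ℤ) (m - 1), ∑ t ∈ Finset.Icc (0 : ℤ) (m - 1),
    Complex.exp (-(2 * (Real.pi : ℂ) * Complex.I) *
      ((U : ℂ) * (s : ℂ) / (2 * ((m * H : ℤ) : ℂ)) +
       (V : ℂ) * (t : ℂ) / (2 * ((m * W : ℤ) : ℂ))))

lemma icc_sum_eq_range (k : ℤ) (hk : 0 < k) (f : ℤ → ℂ) :
    ∑ a ∈ Finset.Icc (0:ℤ) (k-1), f a = ∑ i ∈ Finset.range k.toNat, f i := by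
  refine Finset.sum_nbij' (fun a => a.toNat) (fun i => (i : ℤ)) ?_ ?_ ?_ ?_ ?_
  · intro a ha; simp only [Finset.mem_Icc] at ha; simp only [Finset.mem_range]; omega
  · intro i hi; simp only [Finset.mem_range] at hi; simp only [Finset.mem_Icc]; omega
  · intro a ha; simp only [Finset.mem_Icc] at ha; omega
  · intro i _; simp
  · intro a ha; simp only [Finset.mem_Icc] at ha
    congr 1; omega

lemma rootsum (k c : ℤ) (hk : 0 < k) :
    ∑ a ∈ Finset.Icc (0:ℤ) (k-1),
      Complex.exp (2 * (Real.pi:ℂ) * Complex.I * ((a:ℂ) * c / k)) =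
      if k ∣ c then (k:ℂ) else 0 := by
  have hkC : (k:ℂ) ≠ 0 := by exact_mod_cast hk.ne'
  set ζ : ℂ := Complex.exp (2 * (Real.pi:ℂ) * Complex.I * ((c:ℂ) / k)) with hζdef
  rw [icc_sum_eq_range k hk]
  have hterm' : ∀ i : ℕ, Complex.exp (2 * (Real.pi:ℂ) * Complex.I * (((i:ℤ):ℂ) * c / k)) = ζ ^ i := by
    intro i
    rw [hζdef, ← Complex.exp_nat_mul]
    push_cast
    ring_nf
  simp_rw [hterm']
  by_cases hdvd : k ∣ c
  · obtain ⟨d, hd⟩ := hdvd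
    have hz1 : ζ = 1 := by
      rw [hζdef, hd]
      have h2 : (((k:ℤ) * d : ℤ):ℂ) / k = (d:ℂ) := by push_cast; field_simp
      rw [h2]
      have : 2 * (Real.pi:ℂ) * Complex.I * (d:ℂ) = (d:ℂ) * (2 * (Real.pi:ℂ) * Complex.I) := by ring
      rw [this]
      exact Complex.exp_int_mul_two_pi_mul_I d
    rw [if_pos ⟨d, hd⟩]
    simp only [hz1, one_pow, Finset.sum_const, Finset.card_range, nsmul_eq_mul, mul_one]
    exact_mod_cast Int.toNat_of_nonneg hk.le
  · have hζk : ζ ^ k.toNat = 1 := by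
      rw [← Complex.exp_nat_mul]
      have hkk : ((k.toNat : ℕ) : ℂ) = (k:ℂ) := by exact_mod_cast Int.toNat_of_nonneg hk.le
      rw [hkk]
      have : (k:ℂ) * (2 * (Real.pi:ℂ) * Complex.I * ((c:ℂ)/k)) = (c:ℂ) * (2 * (Real.pi:ℂ) * Complex.I) := by
        field_simp
      rw [this]
      exact Complex.exp_int_mul_two_pi_mul_I c
    have hζ1 : ζ ≠ 1 := by
      intro h
      rw [hζdef, Complex.exp_eq_one_iff] at h
      obtain ⟨n, hn⟩ := h
      apply hdvd
      have h2 : (2 * (Real.pi:ℂ) * Complex.I) ≠ 0 := by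
        simp [Real.pi_ne_zero, Complex.I_ne_zero]
      have h3 : 2 * (Real.pi:ℂ) * Complex.I * ((c:ℂ)/k) = 2 * (Real.pi:ℂ) * Complex.I * (n:ℂ) := by
        rw [hn]; ring
      have hcdk : (c:ℂ) / k = n := mul_left_cancel₀ h2 h3
      have hc : (c:ℂ) = n * k := by
        field_simp at hcdk; linear_combination hcdk
      have hcz : c = n * k := by exact_mod_cast hc
      exact ⟨n, by linarith [hcz, mul_comm n k]⟩
    rw [geom_sum_eq hζ1, hζk]
    simp [hdvd]

lemma reindex (m k H M' s : ℤ) (hm : 0 < m) (hk : 0 < k) (hH : 0 < H)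
    (hMk : k * M' = m * H) (hs0 : 0 ≤ s) (hs1 : s < k) (G : ℤ → ℤ → ℂ) :
    ∑ x' ∈ Finset.Icc (-M') (M'-1), G ((k*x'+s) / m) ((k*x'+s) % m)
    = ∑ x ∈ Finset.Icc (-H) (H-1), ∑ p ∈ Finset.Icc (0:ℤ) (m-1),
        if k ∣ (m*x+p-s) then G x p else 0 := by
  rw [← Finset.sum_product']
  rw [show (∑ z ∈ (Finset.Icc (-H) (H-1)) ×ˢ (Finset.Icc (0:ℤ) (m-1)),
      if k ∣ (m*z.1+z.2-s) then G z.1 z.2 else 0)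
    = ∑ z ∈ ((Finset.Icc (-H) (H-1)) ×ˢ (Finset.Icc (0:ℤ) (m-1))).filter
        (fun z => k ∣ (m*z.1+z.2-s)), G z.1 z.2 from (Finset.sum_filter _ _).symm]
  refine Finset.sum_nbij' (fun x' => ((k*x'+s) / m, (k*x'+s) % m))
    (fun z => (m*z.1+z.2-s) / k) ?_ ?_ ?_ ?_ ?_
  · intro x' hx'
    simp only [Finset.mem_Icc] at hx'
    obtain ⟨h1, h2⟩ := hx'
    simp only [Finset.mem_filter, Finset.mem_product, Finset.mem_Icc]
    set n := k*x'+s with hn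
    have hb1 : -(m*H) ≤ n := by
      have := mul_le_mul_of_nonneg_left h1 hk.le
      nlinarith
    have hb2 : n < m*H := by
      have := mul_le_mul_of_nonneg_left h2 hk.le
      nlinarith
    have hde : m * (n/m) + n % m = n := Int.mul_ediv_add_emod n m
    refine ⟨⟨⟨?_, ?_⟩, ?_, ?_⟩, ?_⟩
    · rw [Int.le_ediv_iff_mul_le hm]; nlinarith
    · have : n / m < H := by rw [Int.ediv_lt_iff_lt_mul hm]; nlinarith
      omega
    · exact Int.emod_nonneg n hm.ne'
    · have := Int.emod_lt_of_pos n hm; omega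
    · exact ⟨x', by omega⟩
  · intro z hz
    simp only [Finset.mem_filter, Finset.mem_product, Finset.mem_Icc] at hz
    obtain ⟨⟨⟨hx1, hx2⟩, hp1, hp2⟩, hdvd⟩ := hz
    simp only [Finset.mem_Icc]
    set c := m*z.1+z.2-s with hc
    have hkc : k * (c / k) = c := Int.mul_ediv_cancel' hdvd
    have hc1 : -(m*H) - k < c := by
      have := mul_le_mul_of_nonneg_left hx1 hm.le
      nlinarith
    have hc2 : c < m*H := by
      have := mul_le_mul_of_nonneg_left hx2 hm.le
      nlinarith
    constructor
    · have h3 : k * (-M' - 1) < k * (c / k) := by rw [hkc]; nlinarith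
      have := lt_of_mul_lt_mul_left h3 hk.le
      omega
    · have h3 : k * (c / k) < k * M' := by rw [hkc]; nlinarith
      have := lt_of_mul_lt_mul_left h3 hk.le
      omega
  · intro x' hx'
    simp only
    have hde : m * ((k*x'+s)/m) + (k*x'+s) % m = k*x'+s := Int.mul_ediv_add_emod _ m
    have h1 : m * ((k*x'+s)/m) + (k*x'+s) % m - s = k*x' := by omega
    rw [h1, Int.mul_ediv_cancel_left x' hk.ne']
  · intro z hz
    simp only [Finset.mem_filter, Finset.mem_product, Finset.mem_Icc] at hz
    obtain ⟨⟨⟨hx1, hx2⟩, hp1, hp2⟩, hdvd⟩ := hz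
    obtain ⟨x, p⟩ := z
    simp only at hx1 hx2 hp1 hp2 hdvd ⊢
    have hkc : k * ((m*x+p-s) / k) = m*x+p-s := Int.mul_ediv_cancel' hdvd
    have h1 : k * ((m*x+p-s)/k) + s = p + m*x := by omega
    rw [h1, Prod.mk.injEq]
    constructor
    · rw [Int.add_mul_ediv_left p x hm.ne', Int.ediv_eq_zero_of_lt hp1 (by omega)]
      ring
    · rw [Int.add_mul_emod_self_left, Int.emod_eq_of_lt hp1 (by omega)]
  · intro x' _; rfl

lemma key (m k H M' u s : ℤ) (hm : 0 < m) (hk : 0 < k) (hH : 0 < H)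
    (hMk : k * M' = m * H) (hs0 : 0 ≤ s) (hs1 : s < k) (f : ℤ → ℂ) :
    ∑ x' ∈ Finset.Icc (-M') (M'-1),
      f ((k*x'+s).fdiv m) *
        Complex.exp (-(2*(Real.pi:ℂ)*Complex.I) * ((u:ℂ) * (x':ℂ) / (2*(M':ℂ))))
    = (1/(k:ℂ)) * ∑ a ∈ Finset.Icc (0:ℤ) (k-1),
        Complex.exp ((2*(Real.pi:ℂ)*Complex.I) *
          (((u+2*a*M' : ℤ):ℂ) * (s:ℂ) / (2*((m:ℂ)*(H:ℂ)))))
      * (∑ p ∈ Finset.Icc (0:ℤ) (m-1),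
          Complex.exp (-(2*(Real.pi:ℂ)*Complex.I) *
            (((u+2*a*M' : ℤ):ℂ) * (p:ℂ) / (2*((m:ℂ)*(H:ℂ))))))
      * (∑ x ∈ Finset.Icc (-H) (H-1),
          f x * Complex.exp (-(2*(Real.pi:ℂ)*Complex.I) *
            (((u+2*a*M' : ℤ):ℂ) * (x:ℂ) / (2*(H:ℂ))))) := by
  have hkC : (k:ℂ) ≠ 0 := by exact_mod_cast hk.ne'
  have hmC : (m:ℂ) ≠ 0 := by exact_mod_cast hm.ne'
  have hHC : (H:ℂ) ≠ 0 := by exact_mod_cast hH.ne'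
  have hMkC : (k:ℂ) * (M':ℂ) = (m:ℂ) * (H:ℂ) := by exact_mod_cast hMk
  have hM0 : M' ≠ 0 := by rintro rfl; nlinarith
  have hM0C : (M':ℂ) ≠ 0 := by exact_mod_cast hM0
  have hM'C : (M':ℂ) = (m:ℂ)*(H:ℂ)/(k:ℂ) := by field_simp; linear_combination hMkC
  set c2 : ℂ := 2*(Real.pi:ℂ)*Complex.I with hc2
  set D : ℤ → ℤ → ℂ := fun x p => f x *
    Complex.exp (c2 * ((u:ℂ) * (((s - p - m*x : ℤ)):ℂ) / (2*((m:ℂ)*(H:ℂ))))) with hD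
  have hmid : ∑ x' ∈ Finset.Icc (-M') (M'-1),
      f ((k*x'+s).fdiv m) * Complex.exp (-c2 * ((u:ℂ) * (x':ℂ) / (2*(M':ℂ))))
      = ∑ x ∈ Finset.Icc (-H) (H-1), ∑ p ∈ Finset.Icc (0:ℤ) (m-1),
          if k ∣ (m*x+p-s) then D x p else 0 := by
    rw [← reindex m k H M' s hm hk hH hMk hs0 hs1 D]
    refine Finset.sum_congr rfl (fun x' hx' => ?_)
    rw [hD]
    simp only
    rw [Int.fdiv_eq_ediv_of_nonneg _ hm.le]
    congr 1
    have hde : m * ((k*x'+s)/m) + (k*x'+s) % m = k*x'+s := Int.mul_ediv_add_emod _ m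
    have h1 : (s - ((k*x'+s) % m) - m*((k*x'+s)/m) : ℤ) = -(k*x') := by omega
    rw [h1]
    congr 1
    push_cast
    rw [show (2:ℂ)*((m:ℂ)*(H:ℂ)) = (k:ℂ)*(2*(M':ℂ)) from by linear_combination -2*hMkC]
    rw [show (u:ℂ)*(-((k:ℂ)*(x':ℂ))) = (k:ℂ)*((u:ℂ)*(-(x':ℂ))) from by ring]
    rw [mul_div_mul_left _ _ hkC]
    ring
  rw [hmid]
  have hsplit : ∀ a : ℤ,
      Complex.exp (c2 * (((u+2*a*M' : ℤ):ℂ) * (s:ℂ) / (2*((m:ℂ)*(H:ℂ)))))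
      * (∑ p ∈ Finset.Icc (0:ℤ) (m-1),
          Complex.exp (-c2 * (((u+2*a*M' : ℤ):ℂ) * (p:ℂ) / (2*((m:ℂ)*(H:ℂ))))))
      * (∑ x ∈ Finset.Icc (-H) (H-1),
          f x * Complex.exp (-c2 * (((u+2*a*M' : ℤ):ℂ) * (x:ℂ) / (2*(H:ℂ)))))
      = ∑ p ∈ Finset.Icc (0:ℤ) (m-1), ∑ x ∈ Finset.Icc (-H) (H-1),
          D x p * Complex.exp (c2 * ((a:ℂ) * (((s - p - m*x : ℤ)):ℂ) / (k:ℂ))) := by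
    intro a
    rw [mul_assoc, Finset.sum_mul_sum, Finset.mul_sum]
    refine Finset.sum_congr rfl (fun p hp => ?_)
    rw [Finset.mul_sum]
    refine Finset.sum_congr rfl (fun x hx => ?_)
    rw [hD]
    simp only
    rw [show ∀ z1 z2 z3 : ℂ, Complex.exp z1 * (Complex.exp z2 * (f x * Complex.exp z3))
        = f x * Complex.exp (z1 + z2 + z3) from fun z1 z2 z3 => by
      rw [Complex.exp_add, Complex.exp_add]; ring]
    rw [show ∀ z4 z5 : ℂ, f x * Complex.exp z4 * Complex.exp z5
        = f x * Complex.exp (z4 + z5) from fun z4 z5 => by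
      rw [Complex.exp_add]; ring]
    congr 2
    push_cast
    rw [show ((u:ℂ)+2*(a:ℂ)*(M':ℂ)) * (x:ℂ) / (2*(H:ℂ))
        = (m:ℂ)*(((u:ℂ)+2*(a:ℂ)*(M':ℂ)) * (x:ℂ)) / ((m:ℂ)*(2*(H:ℂ))) from
      (mul_div_mul_left _ _ hmC).symm]
    rw [show (a:ℂ) * ((s:ℂ)-(p:ℂ)-(m:ℂ)*(x:ℂ)) / (k:ℂ)
        = (2*(M':ℂ))*((a:ℂ) * ((s:ℂ)-(p:ℂ)-(m:ℂ)*(x:ℂ))) / ((2*(M':ℂ))*(k:ℂ)) from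
      (mul_div_mul_left _ _ (mul_ne_zero two_ne_zero hM0C)).symm]
    rw [show ((m:ℂ))*(2*(H:ℂ)) = 2*((m:ℂ)*(H:ℂ)) from by ring]
    rw [show (2*(M':ℂ))*(k:ℂ) = 2*((m:ℂ)*(H:ℂ)) from by linear_combination 2*hMkC]
    rw [div_eq_mul_inv, div_eq_mul_inv, div_eq_mul_inv, div_eq_mul_inv, div_eq_mul_inv]
    ring
  simp_rw [hsplit]
  rw [Finset.sum_comm]
  conv_rhs => rw [Finset.sum_comm]
  rw [Finset.mul_sum]
  refine Finset.sum_congr rfl (fun p hp => ?_)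
  rw [Finset.sum_comm]
  rw [Finset.mul_sum]
  refine Finset.sum_congr rfl (fun x hx => ?_)
  rw [← Finset.mul_sum, rootsum k (s - p - m*x) hk]
  by_cases hdvd : k ∣ (s - p - m*x)
  · have hdvd' : k ∣ (m*x+p-s) := by
      rw [show m*x+p-s = -(s-p-m*x) from by ring]; exact dvd_neg.mpr hdvd
    rw [if_pos hdvd, if_pos hdvd']
    field_simp
  · have hdvd' : ¬ k ∣ (m*x+p-s) := by
      intro h; apply hdvd
      rw [show s-p-m*x = -(m*x+p-s) from by ring]; exact dvd_neg.mpr h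
    rw [if_neg hdvd, if_neg hdvd']
    ring


lemma rot3 (S1 S2 S3 : Finset ℤ) (F : ℤ → ℤ → ℤ → ℂ) :
    ∑ i ∈ S1, ∑ j ∈ S2, ∑ l ∈ S3, F i j l = ∑ j ∈ S2, ∑ l ∈ S3, ∑ i ∈ S1, F i j l :=
  (Finset.sum_comm).trans (Finset.sum_congr rfl fun _ _ => Finset.sum_comm)

lemma reorder4 (S1 S2 S3 S4 : Finset ℤ) (F : ℤ → ℤ → ℤ → ℤ → ℂ) :
    ∑ i ∈ S1, ∑ j ∈ S2, ∑ l ∈ S3, ∑ r ∈ S4, F i j l r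
    = ∑ l ∈ S3, ∑ r ∈ S4, ∑ i ∈ S1, ∑ j ∈ S2, F i j l r :=
  (Finset.sum_congr rfl fun i _ => rot3 S2 S3 S4 (F i)).trans
    (rot3 S1 S3 S4 fun i l r => ∑ j ∈ S2, F i j l r)

lemma shuffle1 (S1 S2 : Finset ℤ) (a : ℂ) (Af Bf : ℤ → ℂ) (Cf : ℤ → ℤ → ℂ) :
    ∑ i ∈ S1, ∑ j ∈ S2, a * Cf i j * (Af i * Bf j)
    = ∑ i ∈ S1, (a * Af i) * ∑ j ∈ S2, Cf i j * Bf j := by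
  refine Finset.sum_congr rfl fun i _ => ?_
  rw [Finset.mul_sum]
  exact Finset.sum_congr rfl fun j _ => by ring

lemma shuffle2 (S1 S2 : Finset ℤ) (c : ℂ) (Af Gf : ℤ → ℂ) (Bf : ℤ → ℤ → ℂ) :
    ∑ i ∈ S1, Af i * (c * ∑ j ∈ S2, Gf j * Bf j i)
    = c * ∑ j ∈ S2, Gf j * ∑ i ∈ S1, Af i * Bf j i := by
  have h1 : ∀ i, Af i * (c * ∑ j ∈ S2, Gf j * Bf j i)
      = ∑ j ∈ S2, c * (Af i * (Gf j * Bf j i)) := by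
    intro i
    rw [Finset.mul_sum, Finset.mul_sum]
    exact Finset.sum_congr rfl fun j _ => by ring
  calc ∑ i ∈ S1, Af i * (c * ∑ j ∈ S2, Gf j * Bf j i)
      = ∑ i ∈ S1, ∑ j ∈ S2, c * (Af i * (Gf j * Bf j i)) := Finset.sum_congr rfl fun i _ => h1 i
    _ = ∑ j ∈ S2, ∑ i ∈ S1, c * (Af i * (Gf j * Bf j i)) := Finset.sum_comm
    _ = c * ∑ j ∈ S2, Gf j * ∑ i ∈ S1, Af i * Bf j i := by
        rw [Finset.mul_sum]
        refine Finset.sum_congr rfl fun j _ => ?_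
        rw [Finset.mul_sum, Finset.mul_sum]
        exact Finset.sum_congr rfl fun i _ => by ring

lemma shuffle3 (S1 : Finset ℤ) (a : ℂ) (Af Bf : ℤ → ℂ) :
    ∑ i ∈ S1, (a * Af i) * Bf i = a * ∑ i ∈ S1, Bf i * Af i := by
  rw [Finset.mul_sum]
  exact Finset.sum_congr rfl fun i _ => by ring

lemma shuffle5 (S1 S2 : Finset ℤ) (c d e : ℂ) (G Hf : ℤ → ℂ) (Sf : ℤ → ℤ → ℂ) :
    c * ∑ j ∈ S1, G j * (e * (d * ∑ i ∈ S2, Hf i * Sf i j))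
    = ∑ j ∈ S1, ∑ i ∈ S2, c * d * e * G j * Hf i * Sf i j := by
  have h : ∀ j, c * (G j * (e * (d * ∑ i ∈ S2, Hf i * Sf i j)))
      = ∑ i ∈ S2, c * d * e * G j * Hf i * Sf i j := by
    intro j
    rw [Finset.mul_sum, Finset.mul_sum, Finset.mul_sum, Finset.mul_sum]
    exact Finset.sum_congr rfl fun i _ => by ring
  rw [Finset.mul_sum]
  exact Finset.sum_congr rfl fun j _ => h j

lemma scalswap (c : ℂ) (S1 S2 : Finset ℤ) (T : ℤ → ℤ → ℂ) :
    (1/c^2) * ∑ i ∈ S1, ∑ j ∈ S2, T i j = ∑ j ∈ S2, ∑ i ∈ S1, (1/c) * (1/c) * T i j := by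
  calc (1/c^2) * ∑ i ∈ S1, ∑ j ∈ S2, T i j
      = ∑ i ∈ S1, ∑ j ∈ S2, (1/c) * (1/c) * T i j := by
        rw [Finset.mul_sum]
        refine Finset.sum_congr rfl fun i _ => ?_
        rw [Finset.mul_sum]
        exact Finset.sum_congr rfl fun j _ => by ring
    _ = ∑ j ∈ S2, ∑ i ∈ S1, (1/c) * (1/c) * T i j := Finset.sum_comm

lemma shuffleR2 (S1 S2 : Finset ℤ) (c P D : ℂ) (A : ℤ → ℤ → ℂ) :
    c * ((∑ s ∈ S1, ∑ t ∈ S2, A s t) * P * D) = ∑ s ∈ S1, ∑ t ∈ S2, c * A s t * P * D := by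
  rw [Finset.sum_mul, Finset.sum_mul, Finset.mul_sum]
  refine Finset.sum_congr rfl fun s _ => ?_
  rw [Finset.sum_mul, Finset.sum_mul, Finset.mul_sum]
  exact Finset.sum_congr rfl fun t _ => by ring

lemma bu_split (S : Finset ℤ) (f g : ℤ → ℂ) :
    (∑ p ∈ S, ∑ q ∈ S, f p * g q) = (∑ p ∈ S, f p) * (∑ q ∈ S, g q) :=
  (Finset.sum_mul_sum S S f g).symm


/-- Resizing by the rational ratio `k/m` (m-fold nearest-neighbor up-sampling followed by
`k`-fold kernel down-sampling) mixes contributions from the entire spectrum of the original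
image: for all integers `u, v`, the DFT of the resized image on the `2(mH/k) × 2(mW/k)` grid
satisfies `F_Z(u,v) = (1/k²) ∑_{a=0}^{k-1} ∑_{b=0}^{k-1}
β_w(u_a,v_b)·β_up(u_a,v_b)·F_X(u_a,v_b)` with `u_a = u + 2amH/k`, `v_b = v + 2bmW/k`. -/
theorem stmt_6 (H W m k : ℤ) (hH : 0 < H) (hW : 0 < W) (hm : 0 < m) (hk : 0 < k)
    (hkH : k ∣ m * H) (hkW : k ∣ m * W) (w : ℤ → ℤ → ℂ) (X : ℤ → ℤ → ℂ) :
    ∀ u v : ℤ,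
      dft (m * H / k) (m * W / k) (downsample k w (upsample m X)) u v =
        (1 / (k : ℂ) ^ 2) *
          ∑ a ∈ Finset.Icc (0 : ℤ) (k - 1), ∑ b ∈ Finset.Icc (0 : ℤ) (k - 1),
            betaW H W m k w (u + 2 * a * (m * H / k)) (v + 2 * b * (m * W / k)) *
              betaUp H W m (u + 2 * a * (m * H / k)) (v + 2 * b * (m * W / k)) *
              dft H W X (u + 2 * a * (m * H / k)) (v + 2 * b * (m * W / k)) := by
  intro u v
  set M' := m*H/k with hM'def
  set N' := m*W/k with hN'def
  have hMk : k * M' = m * H := by rw [hM'def]; exact Int.mul_ediv_cancel' hkH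
  have hNk : k * N' = m * W := by rw [hN'def]; exact Int.mul_ediv_cancel' hkW
  simp only [dft, downsample, upsample, betaW, betaUp]
  simp only [show ((m*H:ℤ):ℂ) = (m:ℂ)*(H:ℂ) from by push_cast; ring,
             show ((m*W:ℤ):ℂ) = (m:ℂ)*(W:ℂ) from by push_cast; ring]
  simp only [mul_add, Complex.exp_add]
  trans (∑ s ∈ Finset.Icc (0:ℤ) (k-1), ∑ t ∈ Finset.Icc (0:ℤ) (k-1), ∑ b ∈ Finset.Icc (0:ℤ) (k-1), ∑ a ∈ Finset.Icc (0:ℤ) (k-1), (1/(k:ℂ)) * (1/(k:ℂ)) * w s t * (Complex.exp ((2*(Real.pi:ℂ)*Complex.I) * (((v+2*b*N' : ℤ):ℂ) * (t:ℂ) / (2*((m:ℂ)*(W:ℂ))))) * (∑ q ∈ Finset.Icc (0:ℤ) (m-1), Complex.exp (-(2*(Real.pi:ℂ)*Complex.I) * (((v+2*b*N' : ℤ):ℂ) * (q:ℂ) / (2*((m:ℂ)*(W:ℂ))))))) * (Complex.exp ((2*(Real.pi:ℂ)*Complex.I) * (((u+2*a*M' : ℤ):ℂ) * (s:ℂ)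 / (2*((m:ℂ)*(H:ℂ))))) * (∑ p ∈ Finset.Icc (0:ℤ) (m-1), Complex.exp (-(2*(Real.pi:ℂ)*Complex.I) * (((u+2*a*M' : ℤ):ℂ) * (p:ℂ) / (2*((m:ℂ)*(H:ℂ))))))) * (∑ x ∈ Finset.Icc (-H) (H-1), ∑ y ∈ Finset.Icc (-W) (W-1), (X x y * Complex.exp (-(2*(Real.pi:ℂ)*Complex.I) * (((v+2*b*N' : ℤ):ℂ) * (y:ℂ) / (2*(W:ℂ))))) * Complex.exp (-(2*(Real.pi:ℂ)*Complex.I) * (((u+2*a*M' : ℤ):ℂ) * (x:ℂ) / (2*(H:ℂ))))))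
  · simp only [Finset.sum_mul]
    refine (reorder4 _ _ _ _ _).trans ?_
    refine Finset.sum_congr rfl fun s hs => Finset.sum_congr rfl fun t ht => ?_
    obtain ⟨hs0, hs1⟩ := Finset.mem_Icc.mp hs
    obtain ⟨ht0, ht1⟩ := Finset.mem_Icc.mp ht
    calc ∑ xp ∈ Finset.Icc (-M') (M'-1), ∑ yp ∈ Finset.Icc (-N') (N'-1),
            w s t * X ((k*xp+s).fdiv m) ((k*yp+t).fdiv m) * (Complex.exp (-(2*(Real.pi:ℂ)*Complex.I) * ((u:ℂ) * (xp:ℂ) / (2*(M':ℂ)))) * Complex.exp (-(2*(Real.pi:ℂ)*Complex.I) * ((v:ℂ) * (yp:ℂ) / (2*(N':ℂ)))))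
        = ∑ xp ∈ Finset.Icc (-M') (M'-1), (w s t * Complex.exp (-(2*(Real.pi:ℂ)*Complex.I) * ((u:ℂ) * (xp:ℂ) / (2*(M':ℂ))))) *
            ∑ yp ∈ Finset.Icc (-N') (N'-1), X ((k*xp+s).fdiv m) ((k*yp+t).fdiv m) * Complex.exp (-(2*(Real.pi:ℂ)*Complex.I) * ((v:ℂ) * (yp:ℂ) / (2*(N':ℂ)))) :=
          shuffle1 _ _ _ _ _ _
      _ = ∑ xp ∈ Finset.Icc (-M') (M'-1), (w s t * Complex.exp (-(2*(Real.pi:ℂ)*Complex.I) * ((u:ℂ) * (xp:ℂ) / (2*(M':ℂ))))) *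
            ((1/(k:ℂ)) * ∑ b ∈ Finset.Icc (0:ℤ) (k-1), Complex.exp ((2*(Real.pi:ℂ)*Complex.I) * (((v+2*b*N' : ℤ):ℂ) * (t:ℂ) / (2*((m:ℂ)*(W:ℂ))))) * (∑ q ∈ Finset.Icc (0:ℤ) (m-1), Complex.exp (-(2*(Real.pi:ℂ)*Complex.I) * (((v+2*b*N' : ℤ):ℂ) * (q:ℂ) / (2*((m:ℂ)*(W:ℂ)))))) * (∑ y ∈ Finset.Icc (-W) (W-1), X ((k*xp+s).fdiv m) y * Complex.exp (-(2*(Real.pi:ℂ)*Complex.I) * (((v+2*b*N' : ℤ):ℂ) * (y:ℂ) / (2*(W:ℂ)))))) :=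
          Finset.sum_congr rfl fun xp _ =>
            congrArg (fun z => (w s t * Complex.exp (-(2*(Real.pi:ℂ)*Complex.I) * ((u:ℂ) * (xp:ℂ) / (2*(M':ℂ))))) * z)
              (key m k W N' v t hm hk hW hNk ht0 (by omega) (fun yy => X ((k*xp+s).fdiv m) yy))
      _ = (1/(k:ℂ)) * ∑ b ∈ Finset.Icc (0:ℤ) (k-1), (Complex.exp ((2*(Real.pi:ℂ)*Complex.I) * (((v+2*b*N' : ℤ):ℂ) * (t:ℂ) / (2*((m:ℂ)*(W:ℂ))))) * (∑ q ∈ Finset.Icc (0:ℤ) (m-1), Complex.exp (-(2*(Real.pi:ℂ)*Complex.I) * (((v+2*b*N' : ℤ):ℂ) * (q:ℂ) / (2*((m:ℂ)*(W:ℂ))))))) *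
            ∑ xp ∈ Finset.Icc (-M') (M'-1), (w s t * Complex.exp (-(2*(Real.pi:ℂ)*Complex.I) * ((u:ℂ) * (xp:ℂ) / (2*(M':ℂ))))) * (∑ y ∈ Finset.Icc (-W) (W-1), X ((k*xp+s).fdiv m) y * Complex.exp (-(2*(Real.pi:ℂ)*Complex.I) * (((v+2*b*N' : ℤ):ℂ) * (y:ℂ) / (2*(W:ℂ))))) :=
          shuffle2 _ _ _ _ _ _
      _ = (1/(k:ℂ)) * ∑ b ∈ Finset.Icc (0:ℤ) (k-1), (Complex.exp ((2*(Real.pi:ℂ)*Complex.I) * (((v+2*b*N' : ℤ):ℂ) * (t:ℂ) / (2*((m:ℂ)*(W:ℂ))))) * (∑ q ∈ Finset.Icc (0:ℤ) (m-1), Complex.exp (-(2*(Real.pi:ℂ)*Complex.I) * (((v+2*b*N' : ℤ):ℂ) * (q:ℂ) / (2*((m:ℂ)*(W:ℂ))))))) *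
            (w s t * ∑ xp ∈ Finset.Icc (-M') (M'-1), (∑ y ∈ Finset.Icc (-W) (W-1), X ((k*xp+s).fdiv m) y * Complex.exp (-(2*(Real.pi:ℂ)*Complex.I) * (((v+2*b*N' : ℤ):ℂ) * (y:ℂ) / (2*(W:ℂ))))) * Complex.exp (-(2*(Real.pi:ℂ)*Complex.I) * ((u:ℂ) * (xp:ℂ) / (2*(M':ℂ))))) :=
          congrArg (fun z => (1/(k:ℂ)) * z) (Finset.sum_congr rfl fun b _ =>
            congrArg (fun z => (Complex.exp ((2*(Real.pi:ℂ)*Complex.I) * (((v+2*b*N' : ℤ):ℂ) * (t:ℂ) / (2*((m:ℂ)*(W:ℂ))))) * (∑ q ∈ Finset.Icc (0:ℤ) (m-1), Complex.exp (-(2*(Real.pi:ℂ)*Complex.I) * (((v+2*b*N' : ℤ):ℂ) * (q:ℂ) / (2*((m:ℂ)*(W:ℂ))))))) * z) (shuffle3 _ _ _ _))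
      _ = (1/(k:ℂ)) * ∑ b ∈ Finset.Icc (0:ℤ) (k-1), (Complex.exp ((2*(Real.pi:ℂ)*Complex.I) * (((v+2*b*N' : ℤ):ℂ) * (t:ℂ) / (2*((m:ℂ)*(W:ℂ))))) * (∑ q ∈ Finset.Icc (0:ℤ) (m-1), Complex.exp (-(2*(Real.pi:ℂ)*Complex.I) * (((v+2*b*N' : ℤ):ℂ) * (q:ℂ) / (2*((m:ℂ)*(W:ℂ))))))) *
            (w s t * ((1/(k:ℂ)) * ∑ a ∈ Finset.Icc (0:ℤ) (k-1), Complex.exp ((2*(Real.pi:ℂ)*Complex.I) * (((u+2*a*M' : ℤ):ℂ) * (s:ℂ) / (2*((m:ℂ)*(H:ℂ))))) * (∑ p ∈ Finset.Icc (0:ℤ) (m-1), Complex.exp (-(2*(Real.pi:ℂ)*Complex.I) * (((u+2*a*M' : ℤ):ℂ) * (p:ℂ) / (2*((m:ℂ)*(H:ℂ)))))) * (∑ x ∈ Finset.Icc (-H) (H-1), (∑ y ∈ Finset.Icc (-W) (W-1), X x y * Complex.exp (-(2*(Real.pi:ℂ)*Complex.I) * (((v+2*b*N' : ℤ):ℂ)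 * (y:ℂ) / (2*(W:ℂ))))) * Complex.exp (-(2*(Real.pi:ℂ)*Complex.I) * (((u+2*a*M' : ℤ):ℂ) * (x:ℂ) / (2*(H:ℂ))))))) :=
          congrArg (fun z => (1/(k:ℂ)) * z) (Finset.sum_congr rfl fun b _ =>
            congrArg (fun z => (Complex.exp ((2*(Real.pi:ℂ)*Complex.I) * (((v+2*b*N' : ℤ):ℂ) * (t:ℂ) / (2*((m:ℂ)*(W:ℂ))))) * (∑ q ∈ Finset.Icc (0:ℤ) (m-1), Complex.exp (-(2*(Real.pi:ℂ)*Complex.I) * (((v+2*b*N' : ℤ):ℂ) * (q:ℂ) / (2*((m:ℂ)*(W:ℂ))))))) * z)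
              (congrArg (fun z => w s t * z)
                (key m k H M' u s hm hk hH hMk hs0 (by omega)
                  (fun xx => ∑ y ∈ Finset.Icc (-W) (W-1), X xx y * Complex.exp (-(2*(Real.pi:ℂ)*Complex.I) * (((v+2*b*N' : ℤ):ℂ) * (y:ℂ) / (2*(W:ℂ))))))))
      _ = ∑ b ∈ Finset.Icc (0:ℤ) (k-1), ∑ a ∈ Finset.Icc (0:ℤ) (k-1), (1/(k:ℂ)) * (1/(k:ℂ)) * w s t *
            (Complex.exp ((2*(Real.pi:ℂ)*Complex.I) * (((v+2*b*N' : ℤ):ℂ) * (t:ℂ) / (2*((m:ℂ)*(W:ℂ))))) * (∑ q ∈ Finset.Icc (0:ℤ) (m-1), Complex.exp (-(2*(Real.pi:ℂ)*Complex.I) * (((v+2*b*N' : ℤ):ℂ) * (q:ℂ) / (2*((m:ℂ)*(W:ℂ))))))) * (Complex.exp ((2*(Real.pi:ℂ)*Complex.I) * (((u+2*a*M' : ℤ):ℂ) * (s:ℂ) / (2*((m:ℂ)*(H:ℂ))))) * (∑ p ∈ Finset.Icc (0:ℤ) (m-1), Complex.exp (-(2*(Real.pi:ℂ)*Complex.I)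 * (((u+2*a*M' : ℤ):ℂ) * (p:ℂ) / (2*((m:ℂ)*(H:ℂ))))))) * (∑ x ∈ Finset.Icc (-H) (H-1), (∑ y ∈ Finset.Icc (-W) (W-1), X x y * Complex.exp (-(2*(Real.pi:ℂ)*Complex.I) * (((v+2*b*N' : ℤ):ℂ) * (y:ℂ) / (2*(W:ℂ))))) * Complex.exp (-(2*(Real.pi:ℂ)*Complex.I) * (((u+2*a*M' : ℤ):ℂ) * (x:ℂ) / (2*(H:ℂ))))) :=
          shuffle5 _ _ _ _ _ _ _ _
      _ = ∑ b ∈ Finset.Icc (0:ℤ) (k-1), ∑ a ∈ Finset.Icc (0:ℤ) (k-1), (1/(k:ℂ)) * (1/(k:ℂ)) * w s t * (Complex.exp ((2*(Real.pi:ℂ)*Complex.I) * (((v+2*b*N' : ℤ):ℂ) * (t:ℂ) / (2*((m:ℂ)*(W:ℂ))))) * (∑ q ∈ Finset.Icc (0:ℤ) (m-1), Complex.exp (-(2*(Real.pi:ℂ)*Complex.I) * (((v+2*b*N' : ℤ):ℂ) * (q:ℂ) / (2*((m:ℂ)*(W:ℂ))))))) * (Complex.exp ((2*(Real.pi:ℂ)*Complex.I)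 * (((u+2*a*M' : ℤ):ℂ) * (s:ℂ) / (2*((m:ℂ)*(H:ℂ))))) * (∑ p ∈ Finset.Icc (0:ℤ) (m-1), Complex.exp (-(2*(Real.pi:ℂ)*Complex.I) * (((u+2*a*M' : ℤ):ℂ) * (p:ℂ) / (2*((m:ℂ)*(H:ℂ))))))) * (∑ x ∈ Finset.Icc (-H) (H-1), ∑ y ∈ Finset.Icc (-W) (W-1), (X x y * Complex.exp (-(2*(Real.pi:ℂ)*Complex.I) * (((v+2*b*N' : ℤ):ℂ) * (y:ℂ) / (2*(W:ℂ))))) * Complex.exp (-(2*(Real.pi:ℂ)*Complex.I) * (((u+2*a*M' : ℤ):ℂ) * (x:ℂ) / (2*(H:ℂ))))) :=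
          Finset.sum_congr rfl fun b _ => Finset.sum_congr rfl fun a _ =>
            congrArg (fun z => (1/(k:ℂ)) * (1/(k:ℂ)) * w s t *
              (Complex.exp ((2*(Real.pi:ℂ)*Complex.I) * (((v+2*b*N' : ℤ):ℂ) * (t:ℂ) / (2*((m:ℂ)*(W:ℂ))))) * (∑ q ∈ Finset.Icc (0:ℤ) (m-1), Complex.exp (-(2*(Real.pi:ℂ)*Complex.I) * (((v+2*b*N' : ℤ):ℂ) * (q:ℂ) / (2*((m:ℂ)*(W:ℂ))))))) * (Complex.exp ((2*(Real.pi:ℂ)*Complex.I) * (((u+2*a*M' : ℤ):ℂ) * (s:ℂ) / (2*((m:ℂ)*(H:ℂ))))) * (∑ p ∈ Finset.Icc (0:ℤ) (m-1), Complex.exp (-(2*(Real.pi:ℂ)*Complex.I) * (((u+2*a*M' : ℤ):ℂ) * (p:ℂ) / (2*((m:ℂ)*(H:ℂ))))))) * z)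
              (Finset.sum_congr rfl fun x _ => by rw [Finset.sum_mul])
  · refine Eq.symm ((scalswap (k:ℂ) (Finset.Icc (0:ℤ) (k-1)) (Finset.Icc (0:ℤ) (k-1)) _).trans ?_)
    refine (Finset.sum_congr rfl fun b hb => Finset.sum_congr rfl fun a ha => ?_).trans
      (reorder4 _ _ _ _ _)
    calc (1/(k:ℂ)) * (1/(k:ℂ)) * ((∑ s ∈ Finset.Icc (0:ℤ) (k-1), ∑ t ∈ Finset.Icc (0:ℤ) (k-1), w s t * (Complex.exp ((2*(Real.pi:ℂ)*Complex.I) * (((u+2*a*M' : ℤ):ℂ) * (s:ℂ) / (2*((m:ℂ)*(H:ℂ))))) * Complex.exp ((2*(Real.pi:ℂ)*Complex.I) * (((v+2*b*N' : ℤ):ℂ) * (t:ℂ) / (2*((m:ℂ)*(W:ℂ))))))) * (∑ p ∈ Finset.Icc (0:ℤ) (m-1), ∑ q ∈ Finset.Icc (0:ℤ) (m-1), Complex.exp (-(2*(Real.pi:ℂ)*Complex.I) * (((u+2*a*M' : ℤ):ℂ) * (p:ℂ) / (2*((m:ℂ)*(H:ℂ))))) * Complex.exp (-(2*(Real.pi:ℂ)*Complex.I)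 * (((v+2*b*N' : ℤ):ℂ) * (q:ℂ) / (2*((m:ℂ)*(W:ℂ)))))) * (∑ x ∈ Finset.Icc (-H) (H-1), ∑ y ∈ Finset.Icc (-W) (W-1), X x y * (Complex.exp (-(2*(Real.pi:ℂ)*Complex.I) * (((u+2*a*M' : ℤ):ℂ) * (x:ℂ) / (2*(H:ℂ)))) * Complex.exp (-(2*(Real.pi:ℂ)*Complex.I) * (((v+2*b*N' : ℤ):ℂ) * (y:ℂ) / (2*(W:ℂ)))))))
        = (1/(k:ℂ)) * (1/(k:ℂ)) * ((∑ s ∈ Finset.Icc (0:ℤ) (k-1), ∑ t ∈ Finset.Icc (0:ℤ) (k-1), w s t * (Complex.exp ((2*(Real.pi:ℂ)*Complex.I) * (((u+2*a*M' : ℤ):ℂ) * (s:ℂ) / (2*((m:ℂ)*(H:ℂ))))) * Complex.exp ((2*(Real.pi:ℂ)*Complex.I) * (((v+2*b*N' : ℤ):ℂ) * (t:ℂ) / (2*((m:ℂ)*(W:ℂ))))))) * ((∑ p ∈ Finset.Icc (0:ℤ) (m-1), Complex.exp (-(2*(Real.pi:ℂ)*Complex.I) * (((u+2*a*M' : ℤ):ℂ)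 * (p:ℂ) / (2*((m:ℂ)*(H:ℂ)))))) * (∑ q ∈ Finset.Icc (0:ℤ) (m-1), Complex.exp (-(2*(Real.pi:ℂ)*Complex.I) * (((v+2*b*N' : ℤ):ℂ) * (q:ℂ) / (2*((m:ℂ)*(W:ℂ))))))) * (∑ x ∈ Finset.Icc (-H) (H-1), ∑ y ∈ Finset.Icc (-W) (W-1), X x y * (Complex.exp (-(2*(Real.pi:ℂ)*Complex.I) * (((u+2*a*M' : ℤ):ℂ) * (x:ℂ) / (2*(H:ℂ)))) * Complex.exp (-(2*(Real.pi:ℂ)*Complex.I) * (((v+2*b*N' : ℤ):ℂ) * (y:ℂ) / (2*(W:ℂ))))))) := by rw [bu_split]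
      _ = ∑ s ∈ Finset.Icc (0:ℤ) (k-1), ∑ t ∈ Finset.Icc (0:ℤ) (k-1), (1/(k:ℂ)) * (1/(k:ℂ)) *
            (w s t * (Complex.exp ((2*(Real.pi:ℂ)*Complex.I) * (((u+2*a*M' : ℤ):ℂ) * (s:ℂ) / (2*((m:ℂ)*(H:ℂ))))) * Complex.exp ((2*(Real.pi:ℂ)*Complex.I) * (((v+2*b*N' : ℤ):ℂ) * (t:ℂ) / (2*((m:ℂ)*(W:ℂ))))))) * ((∑ p ∈ Finset.Icc (0:ℤ) (m-1), Complex.exp (-(2*(Real.pi:ℂ)*Complex.I) * (((u+2*a*M' : ℤ):ℂ) * (p:ℂ) / (2*((m:ℂ)*(H:ℂ)))))) * (∑ q ∈ Finset.Icc (0:ℤ) (m-1), Complex.exp (-(2*(Real.pi:ℂ)*Complex.I) * (((v+2*b*N' : ℤ):ℂ) * (q:ℂ) / (2*((m:ℂ)*(W:ℂ))))))) * (∑ x ∈ Finset.Icc (-H) (H-1), ∑ y ∈ Finset.Icc (-W) (W-1), X x y * (Complex.exp (-(2*(Real.pi:ℂ)*Complex.I) * (((u+2*a*M' : ℤ):ℂ)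 * (x:ℂ) / (2*(H:ℂ)))) * Complex.exp (-(2*(Real.pi:ℂ)*Complex.I) * (((v+2*b*N' : ℤ):ℂ) * (y:ℂ) / (2*(W:ℂ)))))) :=
          shuffleR2 _ _ _ _ _ _
      _ = ∑ s ∈ Finset.Icc (0:ℤ) (k-1), ∑ t ∈ Finset.Icc (0:ℤ) (k-1), (1/(k:ℂ)) * (1/(k:ℂ)) * w s t * (Complex.exp ((2*(Real.pi:ℂ)*Complex.I) * (((v+2*b*N' : ℤ):ℂ) * (t:ℂ) / (2*((m:ℂ)*(W:ℂ))))) * (∑ q ∈ Finset.Icc (0:ℤ) (m-1), Complex.exp (-(2*(Real.pi:ℂ)*Complex.I) * (((v+2*b*N' : ℤ):ℂ) * (q:ℂ) / (2*((m:ℂ)*(W:ℂ))))))) * (Complex.exp ((2*(Real.pi:ℂ)*Complex.I) * (((u+2*a*M' : ℤ):ℂ) * (s:ℂ) / (2*((m:ℂ)*(H:ℂ))))) * (∑ p ∈ Finset.Icc (0:ℤ) (m-1), Complex.exp (-(2*(Real.pi:ℂ)*Complex.I) * (((u+2*a*M' : ℤ):ℂ) * (p:ℂ) / (2*((m:ℂ)*(H:ℂ)))))))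 * (∑ x ∈ Finset.Icc (-H) (H-1), ∑ y ∈ Finset.Icc (-W) (W-1), (X x y * Complex.exp (-(2*(Real.pi:ℂ)*Complex.I) * (((v+2*b*N' : ℤ):ℂ) * (y:ℂ) / (2*(W:ℂ))))) * Complex.exp (-(2*(Real.pi:ℂ)*Complex.I) * (((u+2*a*M' : ℤ):ℂ) * (x:ℂ) / (2*(H:ℂ))))) :=
          Finset.sum_congr rfl fun s _ => Finset.sum_congr rfl fun t _ => by
            rw [show (∑ x ∈ Finset.Icc (-H) (H-1), ∑ y ∈ Finset.Icc (-W) (W-1), X x y * (Complex.exp (-(2*(Real.pi:ℂ)*Complex.I) * (((u+2*a*M' : ℤ):ℂ) * (x:ℂ) / (2*(H:ℂ)))) * Complex.exp (-(2*(Real.pi:ℂ)*Complex.I) * (((v+2*b*N' : ℤ):ℂ) * (y:ℂ) / (2*(W:ℂ)))))) = (∑ x ∈ Finset.Icc (-H) (H-1), ∑ y ∈ Finset.Icc (-W) (W-1), (X x y * Complex.exp (-(2*(Real.pi:ℂ)*Complex.I) * (((v+2*b*N' : ℤ):ℂ) * (y:ℂ) / (2*(W:ℂ))))) * Complex.exp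 (-(2*(Real.pi:ℂ)*Complex.I) * (((u+2*a*M' : ℤ):ℂ) * (x:ℂ) / (2*(H:ℂ))))) from
              Finset.sum_congr rfl fun x _ => Finset.sum_congr rfl fun y _ => by ring]
            ring
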